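/- Let R be a commutative ring and u ∈ R with u² = 1, and define nε = Σ_{i=1}^{n} u^{i-1}. If r and s are coprime natural numbers, then the ideal of R generated by rε and sε is the unit ideal. (This is Lemma 'pushpull-ideal': in GW(k), coprime rε and sε generate the unit ideal.) -/
import Mathlib


/-- `nε = Σ_{i=1}^{n} u^{i-1}`, modeling `n_ε ∈ GW(k)` with `u = ⟨-1⟩`. -/
def neps {R : Type*} [CommRing R] (u : R) (n : ℕ) : R :=
  ∑ i ∈ Finset.range n, u ^ i

lemma pow_mul_h {R : Type*} [CommRing R] (u : R) (hu : u ^ 2 = 1) (k : ℕ) :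
    u ^ k * (1 + u) = 1 + u := by
  induction k with
  | zero => ring
  | succ n ih =>
    have : u * (1 + u) = 1 + u := by
      have : u * (1 + u) = u + u ^ 2 := by ring
      rw [this, hu]; ring
    calc u ^ (n+1) * (1+u) = u ^ n * (u * (1+u)) := by ring
    _ = u ^ n * (1+u) := by rw [this]
    _ = 1 + u := ih

lemma h_mul_neps {R : Type*} [CommRing R] (u : R) (hu : u ^ 2 = 1) (n : ℕ) :
    (1 + u) * neps u n = n * (1 + u) := by
  unfold neps
  rw [Finset.mul_sum]
  have : ∀ i ∈ Finset.range n, (1 + u) * u ^ i = 1 + u := by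
    intro i _
    rw [mul_comm]; exact pow_mul_h u hu i
  rw [Finset.sum_congr rfl this, Finset.sum_const, Finset.card_range, nsmul_eq_mul]

lemma neps_odd {R : Type*} [CommRing R] (u : R) (hu : u ^ 2 = 1) (m : ℕ) :
    neps u (2 * m + 1) = m * (1 + u) + 1 := by
  induction m with
  | zero => simp [neps]
  | succ k ih =>
    have h1 : 2 * (k + 1) + 1 = (2 * k + 1) + 1 + 1 := by ring
    rw [h1]
    unfold neps at *
    rw [Finset.sum_range_succ, Finset.sum_range_succ, ih]
    have h2 : u ^ (2*k+1) + u ^ (2*k+1+1) = u ^ (2*k+1) * (1 + u) := by ring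
    push_cast
    have : (k : R) * (1+u) + 1 + u ^ (2*k+1) + u ^ (2*k+1+1)
        = (k : R) * (1+u) + 1 + u ^ (2*k+1) * (1+u) := by ring
    rw [this, pow_mul_h u hu]
    ring

lemma aux3 {R : Type*} [CommRing R] (u : R) (hu : u ^ 2 = 1)
    (r s : ℕ) (hr : Odd r) (hrs : Nat.Coprime r s) :
    Ideal.span {neps u r, neps u s} = (⊤ : Ideal R) := by
  obtain ⟨m, hm⟩ := hr
  rw [Ideal.eq_top_iff_one, Ideal.mem_span_pair]
  have hcop : IsCoprime (r : ℤ) (s : ℤ) := by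
    rw [Int.isCoprime_iff_gcd_eq_one]
    exact_mod_cast hrs
  obtain ⟨a, b, hab⟩ := hcop
  -- m * a * r + m * b * s = m
  set h : R := 1 + u with hh
  refine ⟨1 - (m * a : ℤ) * h, -((m * b : ℤ) * h), ?_⟩
  have hr' : neps u r = m * h + 1 := by
    rw [hm, neps_odd u hu m, hh]
  have e1 : h * neps u r = (r : R) * h := h_mul_neps u hu r
  have e2 : h * neps u s = (s : R) * h := h_mul_neps u hu s
  have key : ((m * a : ℤ) : R) * (h * neps u r) + ((m * b : ℤ) : R) * (h * neps u s)
      = (m : R) * h := by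
    rw [e1, e2]
    have : ((m * a : ℤ) : R) * ((r : R) * h) + ((m * b : ℤ) : R) * ((s : R) * h)
        = (((m * a * r + m * b * s : ℤ)) : R) * h := by push_cast; ring
    rw [this]
    have : (m * a * r + m * b * s : ℤ) = m := by
      have : (m : ℤ) * (a * r + b * s) = m * 1 := by rw [hab]
      linarith [this]
    rw [this]; push_cast; ring
  calc (1 - (m * a : ℤ) * h) * neps u r + (-((m * b : ℤ) * h)) * neps u s
      = neps u r - (((m * a : ℤ) : R) * (h * neps u r) + ((m * b : ℤ) : R) * (h * neps u s)) := by
        push_cast; ring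
    _ = neps u r - (m : R) * h := by rw [key]
    _ = 1 := by rw [hr']; ring

/-- Lemma `pushpull-ideal`: if `r, s` are coprime, then `r_ε` and `s_ε` generate the
unit ideal. -/
theorem stmt3 {R : Type*} [CommRing R] (u : R) (hu : u ^ 2 = 1)
    (r s : ℕ) (hrs : Nat.Coprime r s) :
    Ideal.span {neps u r, neps u s} = (⊤ : Ideal R) := by
  rcases Nat.even_or_odd r with hr | hr
  · have hs : Odd s := by
      rcases Nat.even_or_odd s with hs | hs
      · exfalso
        have h2 : 2 ∣ Nat.gcd r s := Nat.dvd_gcd hr.two_dvd hs.two_dvd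
        rw [hrs] at h2; omega
      · exact hs
    rw [Ideal.span_pair_comm]
    exact aux3 u hu s r hs hrs.symm
  · exact aux3 u hu r s hr hrs
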